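/- Assume that M normalizes both U and Ū and that the multiplication map Ū × M × U → G, (ū, m, u) ↦ ū m u, is injective. Let J be a decomposable subgroup of G, let χ : J → ℂˣ be a group homomorphism that is trivial on J ∩ Ū and on J ∩ U, and let ζ ∈ M be an element commuting with every element of J ∩ M. Then for every j ∈ J with ζ⁻¹ j ζ ∈ J one has χ(ζ⁻¹ j ζ) = χ(j). -/
import Mathlib


open Pointwise

/-- A subgroup `J` of `G` is decomposable with respect to `(Ū, M, U)` if
`J = (J ∩ Ū)(J ∩ M)(J ∩ U)` as a setwise product. -/
def Decomposable {G : Type*} [Group G] (Ubar M U : Subgroup G) (J : Subgroup G) : Prop :=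
  (J : Set G) =
    ((J : Set G) ∩ (Ubar : Set G)) * ((J : Set G) ∩ (M : Set G)) * ((J : Set G) ∩ (U : Set G))

/-- With `M` normalizing `U` and `Ū` and the multiplication `Ū × M × U → G`
injective, let `J` be decomposable, `χ : J → ℂˣ` a homomorphism trivial on `J ∩ Ū` and `J ∩ U`,
and `ζ ∈ M` commuting with every element of `J ∩ M`.  Then for every `j ∈ J` with
`ζ⁻¹ j ζ ∈ J` one has `χ(ζ⁻¹ j ζ) = χ(j)`. -/
theorem intertwine_char {G : Type*} [Group G] (Ubar M U : Subgroup G)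
    (hMU : ∀ m ∈ M, ∀ u ∈ U, m * u * m⁻¹ ∈ U)
    (hMUbar : ∀ m ∈ M, ∀ u ∈ Ubar, m * u * m⁻¹ ∈ Ubar)
    (hinj : Function.Injective fun t : Ubar × M × U => (t.1 : G) * (t.2.1 : G) * (t.2.2 : G))
    (J : Subgroup G) (hJ : Decomposable Ubar M U J)
    (χ : J →* ℂˣ)
    (hχUbar : ∀ (x : G) (hx : x ∈ J), x ∈ Ubar → χ ⟨x, hx⟩ = 1)
    (hχU : ∀ (x : G) (hx : x ∈ J), x ∈ U → χ ⟨x, hx⟩ = 1)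
    (ζ : G) (hζM : ζ ∈ M)
    (hcomm : ∀ x ∈ J ⊓ M, ζ * x = x * ζ) :
    ∀ (j : G) (hj : j ∈ J) (hj' : ζ⁻¹ * j * ζ ∈ J),
      χ ⟨ζ⁻¹ * j * ζ, hj'⟩ = χ ⟨j, hj⟩ := by
  have key : ∀ (x : G) (hx : x ∈ J) (a b c : G) (haJ : a ∈ J) (hbJ : b ∈ J) (hcJ : c ∈ J),
      a ∈ Ubar → c ∈ U → x = a * b * c → χ ⟨x, hx⟩ = χ ⟨b, hbJ⟩ := by
    intro x hx a b c haJ hbJ hcJ haU hcU hxe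
    have hx' : (⟨x, hx⟩ : J) = ⟨a, haJ⟩ * ⟨b, hbJ⟩ * ⟨c, hcJ⟩ := by
      ext; simp [hxe]
    rw [hx', map_mul, map_mul, hχUbar a haJ haU, hχU c hcJ hcU, one_mul, mul_one]
  intro j hj hj'
  have hj1 : j ∈ ((J : Set G) ∩ Ubar) * ((J : Set G) ∩ M) * ((J : Set G) ∩ U) := hJ ▸ hj
  have hj'1 : ζ⁻¹ * j * ζ ∈ ((J : Set G) ∩ Ubar) * ((J : Set G) ∩ M) * ((J : Set G) ∩ U) :=
    hJ ▸ hj'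
  obtain ⟨p, ⟨a, ⟨haJ, haU⟩, b, ⟨hbJ, hbM⟩, rfl⟩, c, ⟨hcJ, hcU⟩, rfl⟩ := hj1
  obtain ⟨p', ⟨a', ⟨haJ', haU'⟩, b', ⟨hbJ', hbM'⟩, rfl⟩, c', ⟨hcJ', hcU'⟩, heq⟩ := hj'1
  -- heq : a' * b' * c' = ζ⁻¹ * (a * b * c) * ζ
  have hbm : ζ⁻¹ * b * ζ = b := by
    have h := hcomm b ⟨hbJ, hbM⟩
    rw [mul_assoc, ← h]
    group
  have haUc : ζ⁻¹ * a * ζ ∈ Ubar := by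
    simpa using hMUbar ζ⁻¹ (inv_mem hζM) a haU
  have hcUc : ζ⁻¹ * c * ζ ∈ U := by
    simpa using hMU ζ⁻¹ (inv_mem hζM) c hcU
  have heq' : a' * b' * c' = ζ⁻¹ * (a * b * c) * ζ := heq
  have heq2 : (ζ⁻¹ * a * ζ) * b * (ζ⁻¹ * c * ζ) = a' * b' * c' := by
    rw [heq']
    nth_rewrite 1 [← hbm]
    group
  have h3 : ((⟨⟨a', haU'⟩, ⟨b', hbM'⟩, ⟨c', hcU'⟩⟩ : Ubar × M × U)) =
      ⟨⟨ζ⁻¹ * a * ζ, haUc⟩, ⟨b, hbM⟩, ⟨ζ⁻¹ * c * ζ, hcUc⟩⟩ := hinj heq2.symm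
  have hb' : b' = b := congrArg (fun t : Ubar × M × U => (t.2.1 : G)) h3
  rw [key _ hj' a' b' c' haJ' hbJ' hcJ' haU' hcU' heq'.symm,
     key _ hj a b c haJ hbJ hcJ haU hcU rfl]
  exact congrArg χ (Subtype.ext hb')
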